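/- Let R be a unital (not necessarily commutative) ring such that every left ideal of R is projective as a left R-module and every finitely generated left ideal of R is principal. Then for any two principal left ideals A = Ra and B = Rb of R, both A + B and A ∩ B are principal left ideals. -/
import Mathlib


/-- Let `R` be a unital ring such that every left ideal of `R` is
projective as a left `R`-module and every finitely generated left ideal of `R` is
principal. Then for any two principal left ideals `R a` and `R b`, both their sum and
their intersection are principal left ideals. -/
theorem principal_sup_inf_of_hereditary_bezout {R : Type*} [Ring R]
    (hproj : ∀ I : Submodule R R, Module.Projective R I)
    (hbez : ∀ I : Submodule R R, I.FG → ∃ a : R, I = Submodule.span R {a}) :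
    ∀ a b : R,
      (∃ c : R, Submodule.span R {a} ⊔ Submodule.span R {b} = Submodule.span R {c}) ∧
      (∃ d : R, Submodule.span R {a} ⊓ Submodule.span R {b} = Submodule.span R {d}) := by
  intro a b
  set A := Submodule.span R {a} with hA
  set B := Submodule.span R {b} with hB
  have hAfg : A.FG := Submodule.fg_span_singleton a
  have hBfg : B.FG := Submodule.fg_span_singleton b
  have hSupFG : (A ⊔ B).FG := hAfg.sup hBfg
  refine ⟨hbez _ hSupFG, ?_⟩
  haveI : Module.Finite R A := Module.Finite.iff_fg.mpr hAfg
  haveI : Module.Finite R B := Module.Finite.iff_fg.mpr hBfg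
  haveI : Module.Finite R (A × B) := Module.Finite.prod
  -- sum map into R
  let π : (A × B) →ₗ[R] R :=
    A.subtype.comp (LinearMap.fst R A B) + B.subtype.comp (LinearMap.snd R A B)
  have hπrange : ∀ m : A × B, π m ∈ A ⊔ B := fun m =>
    Submodule.add_mem_sup m.1.2 m.2.2
  let f : (A × B) →ₗ[R] (A ⊔ B : Submodule R R) := π.codRestrict _ hπrange
  have hfsurj : Function.Surjective f := by
    rintro ⟨x, hx⟩
    rcases Submodule.mem_sup.mp hx with ⟨y, hy, z, hz, rfl⟩
    exact ⟨(⟨y, hy⟩, ⟨z, hz⟩), rfl⟩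
  haveI := hproj (A ⊔ B)
  obtain ⟨s, hs⟩ := Module.projective_lifting_property f LinearMap.id hfsurj
  -- k sends m to first component of m - s (f m), landing in A ⊓ B
  let k : (A × B) →ₗ[R] R :=
    (A.subtype.comp (LinearMap.fst R A B)).comp (LinearMap.id - s.comp f)
  have hk : ∀ m : A × B, k m ∈ A ⊓ B := by
    intro m
    have hf0 : f (m - s (f m)) = 0 := by
      have := congrArg (fun g => g (f m)) hs
      simp only [LinearMap.comp_apply, LinearMap.id_apply] at this
      simp [map_sub, this]
    have hsum : ((m - s (f m)).1 : R) + ((m - s (f m)).2 : R) = 0 := by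
      have := congrArg (Subtype.val) hf0
      simpa [f, π, sub_add_sub_comm] using this
    have h1 : ((m - s (f m)).1 : R) ∈ A := (m - s (f m)).1.2
    have h2 : ((m - s (f m)).1 : R) ∈ B := by
      have : ((m - s (f m)).1 : R) = -((m - s (f m)).2 : R) := eq_neg_of_add_eq_zero_left hsum
      rw [this]; exact neg_mem (m - s (f m)).2.2
    exact ⟨h1, h2⟩
  have hrange : LinearMap.range k = A ⊓ B := by
    apply le_antisymm
    · rintro _ ⟨m, rfl⟩; exact hk m
    · rintro x ⟨hxA, hxB⟩
      refine ⟨(⟨x, hxA⟩, ⟨-x, neg_mem hxB⟩), ?_⟩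
      have hf0 : f ((⟨x, hxA⟩, ⟨-x, neg_mem hxB⟩) : A × B) = 0 := by
        apply Subtype.ext; simp [f, π]
      simp [k, hf0]
  have hfin : (LinearMap.range k).FG := Module.Finite.iff_fg.mp (Module.Finite.range k)
  rw [hrange] at hfin
  exact hbez _ hfin
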